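/- Let γ : ℝ² → ℝ³ be a smooth solution of the VFE parametrized by arc length, let g = (e₀,e₁,e₂) : ℝ² → SO(3) with e₀ = γ_x and smooth k₁,k₂ : ℝ² → ℝ satisfy equations (4.3), and set q = (1/2)(k₁ + i k₂). Choose φ₀ ∈ SU(2) with g(0,0) = Ad(φ₀)[δ], let E be a frame of q with det E ≡ 1 and E(0,0,λ) = φ₀ for all λ, and let α = (∂E/∂λ)·E⁻¹ evaluated at λ = 0. Then, under the identification su(2) ≅ ℝ³, γ(x,t) = α(x,t) + γ(0,0) for all (x,t), and g = Ad(φ)[δ] where φ(x,t) = E(x,t,0). -/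

import Mathlib

open Matrix Complex

noncomputable section

attribute [local instance] Matrix.normedAddCommGroup Matrix.normedSpace

/-- Partial derivative in the first (space) variable. -/
def pdx {V : Type*} [NormedAddCommGroup V] [NormedSpace ℝ V] (f : ℝ → ℝ → V) : ℝ → ℝ → V :=
  fun x t => deriv (fun s => f s t) x

/-- Partial derivative in the second (time) variable. -/
def pdt {V : Type*} [NormedAddCommGroup V] [NormedSpace ℝ V] (f : ℝ → ℝ → V) : ℝ → ℝ → V :=
  fun x t => deriv (fun s => f x s) t

/-- Smoothness of a map of two real variables. -/
def Smooth2 {V : Type*} [NormedAddCommGroup V] [NormedSpace ℝ V] (f : ℝ → ℝ → V) : Prop :=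
  ContDiff ℝ (⊤ : ℕ∞) (fun p : ℝ × ℝ => f p.1 p.2)

/-- The focusing nonlinear Schrödinger equation `q_t = (i/2)(q_xx + 2|q|²q)`. -/
def IsSolNLS (q : ℝ → ℝ → ℂ) : Prop :=
  Smooth2 q ∧ ∀ x t, pdt q x t =
    (Complex.I / 2) * (pdx (pdx q) x t + 2 * (Complex.normSq (q x t) : ℂ) * q x t)

/-- `a = diag(i, -i)`. -/
def Ma : Matrix (Fin 2) (Fin 2) ℂ := !![Complex.I, 0; 0, -Complex.I]

/-- `b = [[0,1],[-1,0]]`. -/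
def Mb : Matrix (Fin 2) (Fin 2) ℂ := !![0, 1; -1, 0]

/-- `c = [[0,i],[i,0]]`. -/
def Mc : Matrix (Fin 2) (Fin 2) ℂ := !![0, Complex.I; Complex.I, 0]

/-- `u = [[0,q],[-q̄,0]]`. -/
def Mu (z : ℂ) : Matrix (Fin 2) (Fin 2) ℂ := !![0, z; -(starRingEnd ℂ z), 0]

/-- `Q₋₁(u) = (i/2)[[-|q|², q_x],[q̄_x, |q|²]]`, where `z = q` and `w = q_x`. -/
def Qm1 (z w : ℂ) : Matrix (Fin 2) (Fin 2) ℂ :=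
  (Complex.I / 2) • !![-(Complex.normSq z : ℂ), w; starRingEnd ℂ w, (Complex.normSq z : ℂ)]

/-- A frame of a solution `q` of the NLS: smooth in `(x,t)`, holomorphic in `λ`,
solving `E⁻¹E_x = aλ + u`, `E⁻¹E_t = aλ² + uλ + Q₋₁(u)`, and satisfying the
SU(2)-reality condition `E(x,t,λ̄)* E(x,t,λ) = I`. -/
structure IsFrame (q : ℝ → ℝ → ℂ) (E : ℝ → ℝ → ℂ → Matrix (Fin 2) (Fin 2) ℂ) : Prop where
  smooth : ContDiff ℝ (⊤ : ℕ∞) (fun p : ℝ × ℝ × ℂ => E p.1 p.2.1 p.2.2)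
  holo : ∀ x t, Differentiable ℂ (E x t)
  lax_x : ∀ x t l, pdx (fun x t => E x t l) x t = E x t l * (l • Ma + Mu (q x t))
  lax_t : ∀ x t l, pdt (fun x t => E x t l) x t =
      E x t l * ((l ^ 2) • Ma + l • Mu (q x t) + Qm1 (q x t) (pdx q x t))
  reality : ∀ x t l, (E x t (starRingEnd ℂ l))ᴴ * E x t l = 1

/-- Membership in `su(2)`. -/
def IsSU2alg (X : Matrix (Fin 2) (Fin 2) ℂ) : Prop := Xᴴ = -X ∧ X.trace = 0

/-- Membership in `SU(2)`. -/
def IsSU2 (A : Matrix (Fin 2) (Fin 2) ℂ) : Prop := Aᴴ * A = 1 ∧ A.det = 1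

/-- The linear isometry `su(2) ≅ ℝ³` sending `a, -c, b` to the standard basis:
an element `[[ix, y+iz],[-y+iz, -ix]] = x·a + y·b + z·c` goes to `(x, -z, y)`. -/
def toR3 (X : Matrix (Fin 2) (Fin 2) ℂ) : Fin 3 → ℝ := ![(X 0 0).im, -(X 0 1).im, (X 0 1).re]

/-- `Ad(φ)[δ]`: the 3×3 real matrix whose columns are `φaφ⁻¹, -φcφ⁻¹, φbφ⁻¹`
under the identification `su(2) ≅ ℝ³`. -/
def AdDelta (φ : Matrix (Fin 2) (Fin 2) ℂ) : Matrix (Fin 3) (Fin 3) ℝ :=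
  Matrix.of fun j i => ![toR3 (φ * Ma * φ⁻¹), toR3 (-(φ * Mc * φ⁻¹)), toR3 (φ * Mb * φ⁻¹)] i j

/-- The coefficient matrix of a parallel frame with principal curvatures `k₁, k₂`. -/
def K3 (k₁ k₂ : ℝ) : Matrix (Fin 3) (Fin 3) ℝ := !![0, -k₁, -k₂; k₁, 0, 0; k₂, 0, 0]

/-- Euclidean inner product on ℝ³. -/
def dot3 (v w : Fin 3 → ℝ) : ℝ := v 0 * w 0 + v 1 * w 1 + v 2 * w 2

def IsSO3 (A : Matrix (Fin 3) (Fin 3) ℝ) : Prop := Aᵀ * A = 1 ∧ A.det = 1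

/-- The `t`-coefficient matrix of equations (4.3). -/
def B3 (k₁ k₂ k₁x k₂x : ℝ) : Matrix (Fin 3) (Fin 3) ℝ :=
  !![0, k₂x / 2, -(k₁x / 2);
     -(k₂x / 2), 0, (k₁ ^ 2 + k₂ ^ 2) / 4;
     k₁x / 2, -((k₁ ^ 2 + k₂ ^ 2) / 4), 0]


/-! ### Auxiliary lemmas -/

section Helpers

set_option linter.unusedTactic false
set_option linter.unreachableTactic false
set_option linter.unnecessarySeqFocus false

variable {V : Type*} [NormedAddCommGroup V] [NormedSpace ℝ V]

theorem HasDerivAt.matmul {n m p : ℕ} {A : Type*} [NormedRing A] [NormedAlgebra ℝ A]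
    {f : ℝ → Matrix (Fin n) (Fin m) A} {g : ℝ → Matrix (Fin m) (Fin p) A}
    {f' : Matrix (Fin n) (Fin m) A} {g' : Matrix (Fin m) (Fin p) A} {x : ℝ}
    (hf : HasDerivAt f f' x) (hg : HasDerivAt g g' x) :
    HasDerivAt (fun y => f y * g y) (f' * g x + f x * g') x := by
  erw [hasDerivAt_pi] at hf hg ⊢
  intro i
  rw [hasDerivAt_pi]
  intro j
  have : ∀ y, (f y * g y) i j = ∑ k, f y i k * g y k j := fun y => Matrix.mul_apply
  simp only [this, Matrix.add_apply, Matrix.mul_apply]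
  rw [← Finset.sum_add_distrib]
  apply HasDerivAt.fun_sum
  intro k _
  have hfk : HasDerivAt (fun y => f y i k) (f' i k) x := (hasDerivAt_pi.mp (hf i)) k
  have hgk : HasDerivAt (fun y => g y k j) (g' k j) x := (hasDerivAt_pi.mp (hg k)) j
  exact hfk.mul hgk

theorem matrix_hasDerivAt_entry {n m : ℕ} {A : Type*} [NormedRing A] [NormedAlgebra ℝ A]
    {f : ℝ → Matrix (Fin n) (Fin m) A} {f' : Matrix (Fin n) (Fin m) A} {x : ℝ}
    (hf : HasDerivAt f f' x) (i : Fin n) (j : Fin m) :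
    HasDerivAt (fun y => f y i j) (f' i j) x := by
  erw [hasDerivAt_pi] at hf
  exact (hasDerivAt_pi.mp (hf i)) j

theorem clairaut {f : ℝ × ℝ → V} (hf : ContDiff ℝ (⊤ : ℕ∞) f) (a b : ℝ) :
    HasDerivAt (fun x => deriv (fun s => f (x, s)) b)
      (deriv (fun s => deriv (fun x => f (x, s)) a) b) a := by
  set D := fderiv ℝ f with hDdef
  have hfd : Differentiable ℝ f := hf.differentiable (by simp)
  have hD : ContDiff ℝ (⊤ : ℕ∞) D := hf.fderiv_right (by simp)
  have h1 : ∀ p : ℝ × ℝ, HasDerivAt (fun s => f (p.1, s)) (D p ((0 : ℝ), (1 : ℝ))) p.2 :=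
    fun p => (hfd p).hasFDerivAt.comp_hasDerivAt p.2
      ((hasDerivAt_const p.2 p.1).prodMk (hasDerivAt_id p.2))
  have h2 : ∀ p : ℝ × ℝ, HasDerivAt (fun x => f (x, p.2)) (D p ((1 : ℝ), (0 : ℝ))) p.1 :=
    fun p => (hfd p).hasFDerivAt.comp_hasDerivAt p.1
      ((hasDerivAt_id p.1).prodMk (hasDerivAt_const p.1 p.2))
  set S := fderiv ℝ D (a, b) with hSdef
  have hDd : HasFDerivAt D S (a, b) := (hD.differentiable (by simp) (a, b)).hasFDerivAt
  have hx : HasDerivAt (fun x => D (x, b)) (S ((1:ℝ), (0:ℝ))) a :=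
    hDd.comp_hasDerivAt a ((hasDerivAt_id a).prodMk (hasDerivAt_const a b))
  have ht : HasDerivAt (fun s => D (a, s)) (S ((0:ℝ), (1:ℝ))) b :=
    hDd.comp_hasDerivAt b ((hasDerivAt_const b a).prodMk (hasDerivAt_id b))
  have hxa : HasDerivAt (fun x => D (x, b) ((0:ℝ), (1:ℝ))) (S ((1:ℝ),(0:ℝ)) ((0:ℝ),(1:ℝ))) a := by
    simpa using hx.clm_apply (hasDerivAt_const a ((0:ℝ),(1:ℝ)))
  have hta : HasDerivAt (fun s => D (a, s) ((1:ℝ), (0:ℝ))) (S ((0:ℝ),(1:ℝ)) ((1:ℝ),(0:ℝ))) b := by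
    simpa using ht.clm_apply (hasDerivAt_const b ((1:ℝ),(0:ℝ)))
  have hsymm : S ((1:ℝ),(0:ℝ)) ((0:ℝ),(1:ℝ)) = S ((0:ℝ),(1:ℝ)) ((1:ℝ),(0:ℝ)) :=
    hf.contDiffAt.isSymmSndFDerivAt (by rw [minSmoothness_of_isRCLikeNormedField]; exact WithTop.coe_le_coe.mpr le_top) _ _
  have e1 : (fun x => deriv (fun s => f (x, s)) b) = fun x => D (x, b) ((0:ℝ), (1:ℝ)) := by
    funext x; exact (h1 (x, b)).deriv
  have e2 : deriv (fun s => deriv (fun x => f (x, s)) a) b = S ((1:ℝ),(0:ℝ)) ((0:ℝ),(1:ℝ)) := by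
    have : (fun s => deriv (fun x => f (x, s)) a) = fun s => D (a, s) ((1:ℝ), (0:ℝ)) := by
      funext s; exact (h2 (a, s)).deriv
    rw [this, hta.deriv, hsymm]
  rw [e2, e1]
  exact hxa

theorem Smooth2.hasDerivAt_x {f : ℝ → ℝ → V} (hf : Smooth2 f) (x t : ℝ) :
    HasDerivAt (fun s => f s t) (pdx f x t) x := by
  have : DifferentiableAt ℝ (fun s => f s t) x :=
    ((hf.differentiable (by simp)).comp
      (differentiable_id.prodMk (differentiable_const t))).differentiableAt
  exact this.hasDerivAt

theorem Smooth2.hasDerivAt_t {f : ℝ → ℝ → V} (hf : Smooth2 f) (x t : ℝ) :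
    HasDerivAt (fun s => f x s) (pdt f x t) t := by
  have : DifferentiableAt ℝ (fun s => f x s) t :=
    ((hf.differentiable (by simp)).comp
      ((differentiable_const x).prodMk differentiable_id)).differentiableAt
  exact this.hasDerivAt

theorem Smooth2.pdx_smooth {f : ℝ → ℝ → V} (hf : Smooth2 f) : Smooth2 (pdx f) := by
  have key : ∀ x t : ℝ, pdx f x t =
      fderiv ℝ (fun p : ℝ × ℝ => f p.1 p.2) (x, t) ((1:ℝ), (0:ℝ)) := by
    intro x t
    have h := ((hf.differentiable (by simp)) (x, t)).hasFDerivAt.comp_hasDerivAt x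
      ((hasDerivAt_id x).prodMk (hasDerivAt_const x t))
    exact h.deriv
  have : Smooth2 fun x t => fderiv ℝ (fun p : ℝ × ℝ => f p.1 p.2) (x, t) ((1:ℝ), (0:ℝ)) := by
    unfold Smooth2
    exact (hf.fderiv_right (by simp)).clm_apply contDiff_const
  unfold Smooth2 at this ⊢
  convert this using 2 with p
  exact key p.1 p.2

theorem Smooth2.cont_left {f : ℝ → ℝ → V} (hf : Smooth2 f) (t : ℝ) :
    Continuous fun x => f x t :=
  (hf.continuous).comp (continuous_id.prodMk continuous_const)

theorem Smooth2.cont_right {f : ℝ → ℝ → V} (hf : Smooth2 f) (x : ℝ) :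
    Continuous fun t => f x t :=
  (hf.continuous).comp (continuous_const.prodMk continuous_id)

theorem matnorm_mul_le {n : ℕ} (A B : Matrix (Fin n) (Fin n) ℝ) :
    ‖A * B‖ ≤ n * ‖A‖ * ‖B‖ := by
  have hA : (0:ℝ) ≤ ‖A‖ := norm_nonneg _
  have hB : (0:ℝ) ≤ ‖B‖ := norm_nonneg _
  rw [Matrix.norm_le_iff (by positivity)]
  intro i j
  rw [Matrix.mul_apply]
  calc ‖∑ k, A i k * B k j‖ ≤ ∑ k, ‖A i k * B k j‖ := norm_sum_le _ _
    _ ≤ ∑ _k : Fin n, ‖A‖ * ‖B‖ := by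
        apply Finset.sum_le_sum
        intro k _
        calc ‖A i k * B k j‖ ≤ ‖A i k‖ * ‖B k j‖ := norm_mul_le _ _
          _ ≤ ‖A‖ * ‖B‖ := by
              exact mul_le_mul (Matrix.norm_entry_le_entrywise_sup_norm A)
                (Matrix.norm_entry_le_entrywise_sup_norm B) (norm_nonneg _) hA
    _ = n * ‖A‖ * ‖B‖ := by simp [mul_assoc]

open Set in
theorem linear_mat_ode_unique {n : ℕ} (B : ℝ → Matrix (Fin n) (Fin n) ℝ) (hB : Continuous B)
    (f g : ℝ → Matrix (Fin n) (Fin n) ℝ)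
    (hf : ∀ x, HasDerivAt f (f x * B x) x) (hg : ∀ x, HasDerivAt g (g x * B x) x)
    (h0 : f 0 = g 0) : ∀ x, f x = g x := by
  intro x₀
  set R : ℝ := |x₀| + 1 with hR
  have hRpos : 0 < R := by positivity
  set c : ℝ → ℝ := fun t => max (-R) (min t R) with hc
  have hc_mem : ∀ t, c t ∈ Icc (-R) R := by
    intro t
    constructor
    · exact le_max_left _ _
    · simp only [hc, max_le_iff]
      exact ⟨by linarith, min_le_right _ _⟩
  have hc_eq : ∀ t ∈ Icc (-R) R, c t = t := by
    intro t ht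
    simp only [hc]
    rw [min_eq_left ht.2, max_eq_right ht.1]
  obtain ⟨C, hC⟩ := (isCompact_Icc (a := -R) (b := R)).exists_bound_of_continuousOn
    hB.continuousOn
  set K : ℝ := n * max C 0 with hK
  have hKnn : 0 ≤ K := by positivity
  set v : ℝ → Matrix (Fin n) (Fin n) ℝ → Matrix (Fin n) (Fin n) ℝ :=
    fun t y => y * B (c t) with hv
  have hlip : ∀ t, LipschitzWith K.toNNReal (v t) := by
    intro t
    apply LipschitzWith.of_dist_le_mul
    intro y z
    rw [dist_eq_norm, dist_eq_norm]
    have : v t y - v t z = (y - z) * B (c t) := by rw [hv]; simp [sub_mul]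
    rw [this]
    calc ‖(y - z) * B (c t)‖ ≤ n * ‖y - z‖ * ‖B (c t)‖ := matnorm_mul_le _ _
      _ ≤ n * ‖y - z‖ * max C 0 := by
          apply mul_le_mul_of_nonneg_left _ (by positivity)
          exact le_trans (hC _ (hc_mem t)) (le_max_left _ _)
      _ = K.toNNReal * ‖y - z‖ := by
          rw [Real.coe_toNNReal _ hKnn, hK]; ring
  have hmem : x₀ ∈ Icc (-R) R := by
    constructor <;> [skip; skip] <;> cases abs_cases x₀ with
    | inl h => simp [hR]; linarith [h.1]
    | inr h => simp [hR]; linarith [h.1]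
  have h0mem : (0:ℝ) ∈ Ioo (-R) R := ⟨neg_lt_zero.mpr hRpos, hRpos⟩
  have key : EqOn f g (Icc (-R) R) := by
    apply ODE_solution_unique_of_mem_Icc (s := fun _ => univ)
      (fun t _ => (hlip t).lipschitzOnWith) h0mem
      (fun x _ => (hf x).continuousAt.continuousWithinAt) _ (fun _ _ => trivial)
      (fun x _ => (hg x).continuousAt.continuousWithinAt) _ (fun _ _ => trivial) h0
    · intro t ht
      have : v t (f t) = f t * B t := by rw [hv]; simp [hc_eq t (Ioo_subset_Icc_self ht)]
      rw [this]
      exact hf t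
    · intro t ht
      have : v t (g t) = g t * B t := by rw [hv]; simp [hc_eq t (Ioo_subset_Icc_self ht)]
      rw [this]
      exact hg t
  exact key hmem

/-! ### su(2) algebra helpers -/

def delta : Fin 3 → Matrix (Fin 2) (Fin 2) ℂ := ![Ma, -Mc, Mb]

theorem toR3_hasDerivAt {f : ℝ → Matrix (Fin 2) (Fin 2) ℂ} {f' : Matrix (Fin 2) (Fin 2) ℂ} {x : ℝ}
    (hf : HasDerivAt f f' x) (j : Fin 3) :
    HasDerivAt (fun y => toR3 (f y) j) (toR3 f' j) x := by
  fin_cases j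
  · simpa [toR3, Function.comp_def] using
      Complex.imCLM.hasFDerivAt.comp_hasDerivAt x (matrix_hasDerivAt_entry hf 0 0)
  · simpa [toR3, Function.comp_def] using
      ((Complex.imCLM.hasFDerivAt.comp_hasDerivAt x (matrix_hasDerivAt_entry hf 0 1))).fun_neg
  · simpa [toR3, Function.comp_def] using
      Complex.reCLM.hasFDerivAt.comp_hasDerivAt x (matrix_hasDerivAt_entry hf 0 1)

theorem conjTranspose_hasDerivAt {f : ℝ → Matrix (Fin 2) (Fin 2) ℂ}
    {f' : Matrix (Fin 2) (Fin 2) ℂ} {x : ℝ} (hf : HasDerivAt f f' x) :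
    HasDerivAt (fun y => (f y)ᴴ) f'ᴴ x := by
  erw [hasDerivAt_pi]
  intro i
  rw [hasDerivAt_pi]
  intro j
  exact (matrix_hasDerivAt_entry hf j i).star

theorem toR3_apply_add (X Y : Matrix (Fin 2) (Fin 2) ℂ) (j : Fin 3) :
    toR3 (X + Y) j = toR3 X j + toR3 Y j := by
  fin_cases j <;> simp [toR3] <;> ring

theorem toR3_apply_smul (r : ℝ) (X : Matrix (Fin 2) (Fin 2) ℂ) (j : Fin 3) :
    toR3 (r • X) j = r * toR3 X j := by
  fin_cases j <;> simp [toR3] <;> ring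

theorem toR3_apply_neg (X : Matrix (Fin 2) (Fin 2) ℂ) (j : Fin 3) :
    toR3 (-X) j = -toR3 X j := by
  fin_cases j <;> simp [toR3]

theorem toR3_zero (j : Fin 3) : toR3 0 j = 0 := by
  fin_cases j <;> simp [toR3]

theorem AdDelta_eq (φ : Matrix (Fin 2) (Fin 2) ℂ) (hunit : φᴴ * φ = 1) :
    AdDelta φ = Matrix.of fun j i => toR3 (φ * delta i * φᴴ) j := by
  have hinv : φ⁻¹ = φᴴ := Matrix.inv_eq_left_inv hunit
  ext j i
  fin_cases i <;>
    simp [AdDelta, delta, hinv, Matrix.neg_mul, Matrix.mul_neg, toR3]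

theorem Mu_conjTranspose (z : ℂ) : (Mu z)ᴴ = -Mu z := by
  ext i j
  fin_cases i <;> fin_cases j <;> simp [Mu]

theorem Qm1_conjTranspose (z w : ℂ) : (Qm1 z w)ᴴ = -Qm1 z w := by
  ext i j
  fin_cases i <;> fin_cases j <;> simp [Qm1, Complex.ext_iff] <;> ring_nf <;> simp

theorem sandwich_hasDerivAt {φ : ℝ → Matrix (Fin 2) (Fin 2) ℂ} {U : Matrix (Fin 2) (Fin 2) ℂ}
    {x : ℝ} (hφ : HasDerivAt φ (φ x * U) x) (hU : Uᴴ = -U) (X : Matrix (Fin 2) (Fin 2) ℂ) :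
    HasDerivAt (fun y => φ y * X * (φ y)ᴴ) (φ x * (U * X - X * U) * (φ x)ᴴ) x := by
  have h1 : HasDerivAt (fun y => φ y * X) (φ x * U * X + φ x * 0) x :=
    hφ.matmul (hasDerivAt_const x X)
  have h2 : HasDerivAt (fun y => (φ y)ᴴ) ((φ x * U)ᴴ) x := conjTranspose_hasDerivAt hφ
  have h3 := h1.matmul h2
  convert h3 using 1
  rw [Matrix.conjTranspose_mul, hU]
  noncomm_ring

theorem adDelta_hasDerivAt {φ : ℝ → Matrix (Fin 2) (Fin 2) ℂ} {U : Matrix (Fin 2) (Fin 2) ℂ}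
    {C : Matrix (Fin 3) (Fin 3) ℝ} {x : ℝ}
    (hφ : HasDerivAt φ (φ x * U) x)
    (hunit : ∀ y, (φ y)ᴴ * φ y = 1)
    (hU : Uᴴ = -U)
    (hcomm : ∀ i : Fin 3, U * delta i - delta i * U = ∑ m, C m i • delta m) :
    HasDerivAt (fun y => AdDelta (φ y)) (AdDelta (φ x) * C) x := by
  have hfun : (fun y => AdDelta (φ y))
      = fun y => Matrix.of fun j i => toR3 (φ y * delta i * (φ y)ᴴ) j := by
    funext y; exact AdDelta_eq (φ y) (hunit y)
  rw [hfun]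
  erw [hasDerivAt_pi]
  intro j
  rw [hasDerivAt_pi]
  intro i
  have key := toR3_hasDerivAt (sandwich_hasDerivAt hφ hU (delta i)) j
  have hval : toR3 (φ x * (U * delta i - delta i * U) * (φ x)ᴴ) j
      = (AdDelta (φ x) * C) j i := by
    rw [hcomm i]
    have expand : φ x * (∑ m, C m i • delta m) * (φ x)ᴴ
        = ∑ m : Fin 3, C m i • (φ x * delta m * (φ x)ᴴ) := by
      rw [Matrix.mul_sum, Matrix.sum_mul]
      congr 1
      funext m
      rw [Matrix.mul_smul, Matrix.smul_mul]
    rw [expand]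
    have : toR3 (∑ m : Fin 3, C m i • (φ x * delta m * (φ x)ᴴ)) j
        = ∑ m : Fin 3, C m i * toR3 (φ x * delta m * (φ x)ᴴ) j := by
      rw [Fin.sum_univ_three, Fin.sum_univ_three, toR3_apply_add, toR3_apply_add,
        toR3_apply_smul, toR3_apply_smul, toR3_apply_smul]
    rw [this, Matrix.mul_apply, AdDelta_eq (φ x) (hunit x)]
    simp [Matrix.of_apply, mul_comm]
  rw [← hval]
  exact key

/-! ### commutator identities -/

theorem commU_a (k₁ k₂ : ℝ) :
    Mu ((1/2 : ℂ) * (k₁ + Complex.I * k₂)) * Ma - Ma * Mu ((1/2 : ℂ) * (k₁ + Complex.I * k₂))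
      = k₁ • (-Mc) + k₂ • Mb := by
  ext i j
  fin_cases i <;> fin_cases j <;>
    simp [Ma, Mb, Mc, Mu, Complex.ext_iff] <;> (try ring_nf) <;> (try simp) <;> (try ring_nf)

theorem commU_c (k₁ k₂ : ℝ) :
    Mu ((1/2 : ℂ) * (k₁ + Complex.I * k₂)) * (-Mc) - (-Mc) * Mu ((1/2 : ℂ) * (k₁ + Complex.I * k₂))
      = (-k₁) • Ma := by
  ext i j
  fin_cases i <;> fin_cases j <;>
    simp [Ma, Mc, Mu, Complex.ext_iff] <;> (try ring_nf) <;> (try simp) <;> (try ring_nf)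

theorem commU_b (k₁ k₂ : ℝ) :
    Mu ((1/2 : ℂ) * (k₁ + Complex.I * k₂)) * Mb - Mb * Mu ((1/2 : ℂ) * (k₁ + Complex.I * k₂))
      = (-k₂) • Ma := by
  ext i j
  fin_cases i <;> fin_cases j <;>
    simp [Ma, Mb, Mu, Complex.ext_iff] <;> (try ring_nf) <;> (try simp) <;> (try ring_nf)

theorem K3_comm (k₁ k₂ : ℝ) (i : Fin 3) :
    Mu ((1/2 : ℂ) * (k₁ + Complex.I * k₂)) * delta i
      - delta i * Mu ((1/2 : ℂ) * (k₁ + Complex.I * k₂))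
      = ∑ m, K3 k₁ k₂ m i • delta m := by
  fin_cases i
  · rw [Fin.sum_univ_three]
    show _ * delta 0 - delta 0 * _ = _
    simp only [delta, K3]
    norm_num [Matrix.cons_val_zero, Matrix.cons_val_one, Matrix.vecHead, Matrix.vecTail]
    simpa [smul_neg] using commU_a k₁ k₂
  · rw [Fin.sum_univ_three]
    show _ * delta 1 - delta 1 * _ = _
    simp only [delta, K3]
    norm_num [Matrix.cons_val_zero, Matrix.cons_val_one, Matrix.vecHead, Matrix.vecTail]
    simpa [smul_neg] using commU_c k₁ k₂
  · rw [Fin.sum_univ_three]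
    show _ * delta 2 - delta 2 * _ = _
    simp only [delta, K3]
    norm_num [Matrix.cons_val_zero, Matrix.cons_val_one, Matrix.vecHead, Matrix.vecTail]
    simpa [smul_neg] using commU_b k₁ k₂

theorem commQ_a (k₁ k₂ k₁x k₂x : ℝ) :
    Qm1 ((1/2 : ℂ) * (k₁ + Complex.I * k₂)) ((1/2 : ℂ) * (k₁x + Complex.I * k₂x)) * Ma
      - Ma * Qm1 ((1/2 : ℂ) * (k₁ + Complex.I * k₂)) ((1/2 : ℂ) * (k₁x + Complex.I * k₂x))
      = (-(k₂x / 2)) • (-Mc) + (k₁x / 2) • Mb := by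
  ext i j
  fin_cases i <;> fin_cases j <;>
    simp [Ma, Mb, Mc, Qm1, Complex.ext_iff, Complex.normSq_apply] <;>
      (try ring_nf) <;> (try simp [← Complex.ofReal_pow]) <;> (try ring_nf)

theorem commQ_c (k₁ k₂ k₁x k₂x : ℝ) :
    Qm1 ((1/2 : ℂ) * (k₁ + Complex.I * k₂)) ((1/2 : ℂ) * (k₁x + Complex.I * k₂x)) * (-Mc)
      - (-Mc) * Qm1 ((1/2 : ℂ) * (k₁ + Complex.I * k₂)) ((1/2 : ℂ) * (k₁x + Complex.I * k₂x))
      = (k₂x / 2) • Ma + (-((k₁ ^ 2 + k₂ ^ 2) / 4)) • Mb := by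
  ext i j
  fin_cases i <;> fin_cases j <;>
    simp [Ma, Mb, Mc, Qm1, Complex.ext_iff, Complex.normSq_apply] <;>
      (try ring_nf) <;> (try simp [← Complex.ofReal_pow]) <;> (try ring_nf)

theorem commQ_b (k₁ k₂ k₁x k₂x : ℝ) :
    Qm1 ((1/2 : ℂ) * (k₁ + Complex.I * k₂)) ((1/2 : ℂ) * (k₁x + Complex.I * k₂x)) * Mb
      - Mb * Qm1 ((1/2 : ℂ) * (k₁ + Complex.I * k₂)) ((1/2 : ℂ) * (k₁x + Complex.I * k₂x))
      = (-(k₁x / 2)) • Ma + ((k₁ ^ 2 + k₂ ^ 2) / 4) • (-Mc) := by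
  ext i j
  fin_cases i <;> fin_cases j <;>
    simp [Ma, Mb, Mc, Qm1, Complex.ext_iff, Complex.normSq_apply] <;>
      (try ring_nf) <;> (try simp [← Complex.ofReal_pow]) <;> (try ring_nf)

theorem B3_comm (k₁ k₂ k₁x k₂x : ℝ) (i : Fin 3) :
    Qm1 ((1/2 : ℂ) * (k₁ + Complex.I * k₂)) ((1/2 : ℂ) * (k₁x + Complex.I * k₂x)) * delta i
      - delta i * Qm1 ((1/2 : ℂ) * (k₁ + Complex.I * k₂)) ((1/2 : ℂ) * (k₁x + Complex.I * k₂x))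
      = ∑ m, B3 k₁ k₂ k₁x k₂x m i • delta m := by
  fin_cases i
  · rw [Fin.sum_univ_three]
    show _ * delta 0 - delta 0 * _ = _
    simp only [delta, B3]
    norm_num [Matrix.cons_val_zero, Matrix.cons_val_one, Matrix.vecHead, Matrix.vecTail]
    simpa [smul_neg] using commQ_a k₁ k₂ k₁x k₂x
  · rw [Fin.sum_univ_three]
    show _ * delta 1 - delta 1 * _ = _
    simp only [delta, B3]
    norm_num [Matrix.cons_val_zero, Matrix.cons_val_one, Matrix.vecHead, Matrix.vecTail]
    simpa [smul_neg] using commQ_c k₁ k₂ k₁x k₂x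
  · rw [Fin.sum_univ_three]
    show _ * delta 2 - delta 2 * _ = _
    simp only [delta, B3]
    norm_num [Matrix.cons_val_zero, Matrix.cons_val_one, Matrix.vecHead, Matrix.vecTail]
    simpa [smul_neg] using commQ_b k₁ k₂ k₁x k₂x

theorem Mu_decomp (k₁ k₂ : ℝ) :
    Mu ((1/2 : ℂ) * (k₁ + Complex.I * k₂)) = (k₁ / 2 : ℝ) • Mb + (k₂ / 2 : ℝ) • Mc := by
  ext i j
  fin_cases i <;> fin_cases j <;>
    simp [Mu, Mb, Mc, Complex.ext_iff] <;> (try ring_nf) <;> (try simp) <;> (try ring_nf)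

theorem hasDerivAt_comp_ofReal' {W : Type*} [NormedAddCommGroup W] [NormedSpace ℂ W]
    {e : ℂ → W} {e' : W} {z : ℝ} (h : HasDerivAt e e' (z : ℂ)) :
    HasDerivAt (fun y : ℝ => e y) e' z := by
  simpa [Function.comp_def] using (h.hasFDerivAt.restrictScalars ℝ).comp_hasDerivAt z Complex.ofRealCLM.hasDerivAt

theorem hasDerivAt_ofReal (z : ℝ) : HasDerivAt (fun s : ℝ => (s : ℂ)) 1 z := by
  simpa using (hasDerivAt_id z).ofReal_comp

theorem so3_cross_col01 {A : Matrix (Fin 3) (Fin 3) ℝ} (hA : IsSO3 A) :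
    crossProduct (fun j => A j 0) (fun j => A j 1) = fun j => A j 2 := by
  obtain ⟨horth, hdet⟩ := hA
  have hAAt : A * Aᵀ = 1 := mul_eq_one_comm.mp horth
  set v : Fin 3 → ℝ := crossProduct (fun j => A j 0) (fun j => A j 1) with hv
  have h1 : Aᵀ *ᵥ v = ![0, 0, 1] := by
    rw [Matrix.det_fin_three] at hdet
    funext k
    fin_cases k
    case _ =>
      simp [Matrix.mulVec, dotProduct, hv, crossProduct, Fin.sum_univ_three]; ring
    case _ =>
      simp [Matrix.mulVec, dotProduct, hv, crossProduct, Fin.sum_univ_three]; ring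
    case _ =>
      simp [Matrix.mulVec, dotProduct, hv, crossProduct, Fin.sum_univ_three]
      linear_combination hdet
  have h2 : v = A *ᵥ (Aᵀ *ᵥ v) := by
    rw [Matrix.mulVec_mulVec, hAAt, Matrix.one_mulVec]
  rw [h1] at h2
  funext j
  rw [h2]
  simp [Matrix.mulVec, dotProduct, Fin.sum_univ_three]

theorem so3_cross_col02 {A : Matrix (Fin 3) (Fin 3) ℝ} (hA : IsSO3 A) :
    crossProduct (fun j => A j 0) (fun j => A j 2) = fun j => -A j 1 := by
  obtain ⟨horth, hdet⟩ := hA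
  have hAAt : A * Aᵀ = 1 := mul_eq_one_comm.mp horth
  set v : Fin 3 → ℝ := crossProduct (fun j => A j 0) (fun j => A j 2) with hv
  have h1 : Aᵀ *ᵥ v = ![0, -1, 0] := by
    rw [Matrix.det_fin_three] at hdet
    funext k
    fin_cases k
    case _ =>
      simp [Matrix.mulVec, dotProduct, hv, crossProduct, Fin.sum_univ_three]; ring
    case _ =>
      simp [Matrix.mulVec, dotProduct, hv, crossProduct, Fin.sum_univ_three]
      linear_combination -hdet
    case _ =>
      simp [Matrix.mulVec, dotProduct, hv, crossProduct, Fin.sum_univ_three]; ring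
  have h2 : v = A *ᵥ (Aᵀ *ᵥ v) := by
    rw [Matrix.mulVec_mulVec, hAAt, Matrix.one_mulVec]
  rw [h1] at h2
  funext j
  rw [h2]
  simp [Matrix.mulVec, dotProduct, Fin.sum_univ_three]

end Helpers

/-- Reconstruction of a VFE solution from the frame of its Hasimoto transform. -/
theorem statement3 (γ : ℝ → ℝ → (Fin 3 → ℝ)) (hsm : Smooth2 γ)
    (harc : ∀ x t, dot3 (pdx γ x t) (pdx γ x t) = 1)
    (hVFE : ∀ x t, pdt γ x t = (1/2 : ℝ) • crossProduct (pdx γ x t) (pdx (pdx γ) x t))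
    (g : ℝ → ℝ → Matrix (Fin 3) (Fin 3) ℝ) (k₁ k₂ : ℝ → ℝ → ℝ)
    (hg : Smooth2 g) (hk₁ : Smooth2 k₁) (hk₂ : Smooth2 k₂)
    (hSO3 : ∀ x t, IsSO3 (g x t))
    (he₀ : ∀ x t j, g x t j 0 = pdx γ x t j)
    (hgx : ∀ x t, pdx g x t = g x t * K3 (k₁ x t) (k₂ x t))
    (hgt : ∀ x t, pdt g x t = g x t * B3 (k₁ x t) (k₂ x t) (pdx k₁ x t) (pdx k₂ x t))
    (q : ℝ → ℝ → ℂ)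
    (hqdef : ∀ x t, q x t = (1/2 : ℂ) * ((k₁ x t : ℂ) + Complex.I * (k₂ x t : ℂ)))
    (φ₀ : Matrix (Fin 2) (Fin 2) ℂ) (hφ₀ : IsSU2 φ₀) (hg00 : g 0 0 = AdDelta φ₀)
    (E : ℝ → ℝ → ℂ → Matrix (Fin 2) (Fin 2) ℂ) (hE : IsFrame q E)
    (hdet : ∀ x t l, (E x t l).det = 1) (hE00 : ∀ l, E 0 0 l = φ₀)
    (α : ℝ → ℝ → Matrix (Fin 2) (Fin 2) ℂ)
    (hα : ∀ x t, α x t = deriv (fun l => E x t l) 0 * (E x t 0)⁻¹) :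
    (∀ x t, γ x t = toR3 (α x t) + γ 0 0) ∧
    (∀ x t, g x t = AdDelta (E x t 0)) := by
  -- basic facts about q
  have hqx_hd : ∀ x t, HasDerivAt (fun s => q s t)
      ((1/2 : ℂ) * (((pdx k₁ x t : ℝ) : ℂ) + Complex.I * ((pdx k₂ x t : ℝ) : ℂ))) x := by
    intro x t
    have h1 : HasDerivAt (fun s => ((k₁ s t : ℝ) : ℂ)) ((pdx k₁ x t : ℝ) : ℂ) x :=
      (hk₁.hasDerivAt_x x t).ofReal_comp
    have h2 : HasDerivAt (fun s => ((k₂ s t : ℝ) : ℂ)) ((pdx k₂ x t : ℝ) : ℂ) x :=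
      (hk₂.hasDerivAt_x x t).ofReal_comp
    have h3 := (h1.fun_add (h2.const_mul Complex.I)).const_mul (1/2 : ℂ)
    have hfun : (fun s => q s t)
        = fun s => (1/2 : ℂ) * (((k₁ s t : ℝ) : ℂ) + Complex.I * ((k₂ s t : ℝ) : ℂ)) := by
      funext s; exact hqdef s t
    rw [hfun]
    convert h3 using 1
  have hqx : ∀ x t, pdx q x t
      = (1/2 : ℂ) * (((pdx k₁ x t : ℝ) : ℂ) + Complex.I * ((pdx k₂ x t : ℝ) : ℂ)) :=
    fun x t => (hqx_hd x t).deriv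
  -- the unitary frame φ = E · · 0
  have hunit : ∀ x t, (E x t 0)ᴴ * (E x t 0) = 1 := by
    intro x t
    simpa using hE.reality x t 0
  have hφsm : Smooth2 (fun x t => E x t 0) := by
    unfold Smooth2
    exact hE.smooth.comp (contDiff_fst.prodMk (contDiff_snd.prodMk contDiff_const))
  have hφx : ∀ x t, HasDerivAt (fun s => E s t 0) (E x t 0 * Mu (q x t)) x := by
    intro x t
    have h := hφsm.hasDerivAt_x x t
    have hval : pdx (fun x t => E x t 0) x t = E x t 0 * Mu (q x t) := by
      simpa using hE.lax_x x t 0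
    rwa [hval] at h
  have hφt : ∀ x t, HasDerivAt (fun s => E x s 0)
      (E x t 0 * Qm1 (q x t) (pdx q x t)) t := by
    intro x t
    have h := hφsm.hasDerivAt_t x t
    have hval : pdt (fun x t => E x t 0) x t = E x t 0 * Qm1 (q x t) (pdx q x t) := by
      simpa using hE.lax_t x t 0
    rwa [hval] at h
  -- derivative of AdDelta ∘ φ
  have hFx : ∀ x t, HasDerivAt (fun s => AdDelta (E s t 0))
      (AdDelta (E x t 0) * K3 (k₁ x t) (k₂ x t)) x := by
    intro x t
    apply adDelta_hasDerivAt (hφx x t) (fun y => hunit y t)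
    · exact Mu_conjTranspose (q x t)
    · intro i
      rw [hqdef x t]
      exact K3_comm (k₁ x t) (k₂ x t) i
  have hFt : ∀ x t, HasDerivAt (fun s => AdDelta (E x s 0))
      (AdDelta (E x t 0) * B3 (k₁ x t) (k₂ x t) (pdx k₁ x t) (pdx k₂ x t)) t := by
    intro x t
    apply adDelta_hasDerivAt (hφt x t) (fun y => hunit x y)
    · exact Qm1_conjTranspose (q x t) (pdx q x t)
    · intro i
      rw [hqdef x t, hqx x t]
      exact B3_comm (k₁ x t) (k₂ x t) (pdx k₁ x t) (pdx k₂ x t) i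
  -- derivatives of g
  have hgx' : ∀ x t, HasDerivAt (fun s => g s t) (g x t * K3 (k₁ x t) (k₂ x t)) x := by
    intro x t
    have h := hg.hasDerivAt_x x t
    rwa [hgx x t] at h
  have hgt' : ∀ x t, HasDerivAt (fun s => g x s)
      (g x t * B3 (k₁ x t) (k₂ x t) (pdx k₁ x t) (pdx k₂ x t)) t := by
    intro x t
    have h := hg.hasDerivAt_t x t
    rwa [hgt x t] at h
  -- continuity of coefficient matrices
  have hpdk₁ : Smooth2 (pdx k₁) := hk₁.pdx_smooth
  have hpdk₂ : Smooth2 (pdx k₂) := hk₂.pdx_smooth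
  have hK3cont : ∀ t, Continuous fun x => K3 (k₁ x t) (k₂ x t) := by
    intro t
    apply continuous_matrix
    intro i j
    fin_cases i <;> fin_cases j <;> simp [K3] <;>
      first
        | exact continuous_const
        | exact (hk₁.cont_left t).neg
        | exact (hk₂.cont_left t).neg
        | exact hk₁.cont_left t
        | exact hk₂.cont_left t
  have hB3cont : Continuous fun t =>
      B3 (k₁ 0 t) (k₂ 0 t) (pdx k₁ 0 t) (pdx k₂ 0 t) := by
    have c1 : Continuous fun t => k₁ 0 t := hk₁.cont_right 0
    have c2 : Continuous fun t => k₂ 0 t := hk₂.cont_right 0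
    have c3 : Continuous fun t => pdx k₁ 0 t := hpdk₁.cont_right 0
    have c4 : Continuous fun t => pdx k₂ 0 t := hpdk₂.cont_right 0
    apply continuous_matrix
    intro i j
    fin_cases i <;> fin_cases j <;> simp [B3] <;>
      first
        | exact continuous_const
        | exact c4.div_const 2
        | exact (c3.div_const 2).neg
        | exact (c4.div_const 2).neg
        | exact c3.div_const 2
        | exact (((c1.pow 2).add (c2.pow 2)).div_const 4)
        | exact (((c1.pow 2).add (c2.pow 2)).div_const 4).neg
  -- uniqueness: g = AdDelta ∘ φ
  have hline : ∀ t, g 0 t = AdDelta (E 0 t 0) := by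
    apply linear_mat_ode_unique
      (fun t => B3 (k₁ 0 t) (k₂ 0 t) (pdx k₁ 0 t) (pdx k₂ 0 t)) hB3cont
      (fun t => g 0 t) (fun t => AdDelta (E 0 t 0))
      (fun t => hgt' 0 t) (fun t => hFt 0 t)
    rw [hg00, hE00 0]
  have hpart2 : ∀ x t, g x t = AdDelta (E x t 0) := by
    intro x t
    exact linear_mat_ode_unique (fun x => K3 (k₁ x t) (k₂ x t)) (hK3cont t)
      (fun x => g x t) (fun x => AdDelta (E x t 0))
      (fun x => hgx' x t) (fun x => hFx x t) (hline t) x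
  -- Part 1: the curve from the frame derivative in λ
  have hYreal : ∀ x t, HasDerivAt (fun s : ℝ => E x t (s : ℂ))
      (deriv (fun l => E x t l) 0) 0 := by
    intro x t
    have h : HasDerivAt (E x t) (deriv (fun l => E x t l) 0) 0 :=
      ((hE.holo x t) 0).hasDerivAt
    exact hasDerivAt_comp_ofReal' h
  have hYx : ∀ x t, HasDerivAt (fun s => deriv (fun l => E s t l) 0)
      (deriv (fun l => E x t l) 0 * Mu (q x t) + E x t 0 * Ma) x := by
    intro x t
    have hfC : ContDiff ℝ (⊤ : ℕ∞) (fun p : ℝ × ℝ => E p.1 t (p.2 : ℂ)) :=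
      hE.smooth.comp (contDiff_fst.prodMk (contDiff_const.prodMk
        (Complex.ofRealCLM.contDiff.comp contDiff_snd)))
    have key := clairaut hfC x 0
    have e1 : (fun x' => deriv (fun s : ℝ => E x' t (s : ℂ)) 0)
        = fun x' => deriv (fun l => E x' t l) 0 := by
      funext x'; exact (hYreal x' t).deriv
    have e2 : deriv (fun s : ℝ => deriv (fun x' => E x' t ((s : ℝ) : ℂ)) x) 0
        = deriv (fun l => E x t l) 0 * Mu (q x t) + E x t 0 * Ma := by
      have einner : (fun s : ℝ => deriv (fun x' => E x' t ((s : ℝ) : ℂ)) x)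
          = fun s : ℝ => E x t (s : ℂ) * (((s : ℂ)) • Ma + Mu (q x t)) := by
        funext s
        exact hE.lax_x x t (s : ℂ)
      rw [einner]
      have hcoef : HasDerivAt (fun s : ℝ => (((s : ℂ)) • Ma + Mu (q x t))) Ma 0 := by
        have h := ((hasDerivAt_ofReal 0).smul_const Ma).add_const (Mu (q x t))
        rw [one_smul] at h
        exact h
      have hprod := (hYreal x t).matmul hcoef
      erw [hprod.deriv]
      norm_num
    erw [e1, e2] at key
    exact key
  have hYt : ∀ x t, HasDerivAt (fun s => deriv (fun l => E x s l) 0)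
      (deriv (fun l => E x t l) 0 * Qm1 (q x t) (pdx q x t) + E x t 0 * Mu (q x t)) t := by
    intro x t
    have hfC : ContDiff ℝ (⊤ : ℕ∞) (fun p : ℝ × ℝ => E x p.1 (p.2 : ℂ)) :=
      hE.smooth.comp (contDiff_const.prodMk (contDiff_fst.prodMk
        (Complex.ofRealCLM.contDiff.comp contDiff_snd)))
    have key := clairaut hfC t 0
    have e1 : (fun t' => deriv (fun s : ℝ => E x t' (s : ℂ)) 0)
        = fun t' => deriv (fun l => E x t' l) 0 := by
      funext t'; exact (hYreal x t').deriv
    have e2 : deriv (fun s : ℝ => deriv (fun t' => E x t' ((s : ℝ) : ℂ)) t) 0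
        = deriv (fun l => E x t l) 0 * Qm1 (q x t) (pdx q x t) + E x t 0 * Mu (q x t) := by
      have einner : (fun s : ℝ => deriv (fun t' => E x t' ((s : ℝ) : ℂ)) t)
          = fun s : ℝ => E x t (s : ℂ)
              * (((s : ℂ) ^ 2) • Ma + ((s : ℂ)) • Mu (q x t) + Qm1 (q x t) (pdx q x t)) := by
        funext s
        exact hE.lax_t x t (s : ℂ)
      rw [einner]
      have hcoef : HasDerivAt (fun s : ℝ =>
          (((s : ℂ) ^ 2) • Ma + ((s : ℂ)) • Mu (q x t) + Qm1 (q x t) (pdx q x t)))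
          (Mu (q x t)) 0 := by
        simp only [pow_two]
        have ha : HasDerivAt (fun s : ℝ => ((s : ℂ) * (s : ℂ)) • Ma)
            (((1 : ℂ) * ((0 : ℝ) : ℂ) + ((0 : ℝ) : ℂ) * 1) • Ma) 0 :=
          ((hasDerivAt_ofReal 0).mul (hasDerivAt_ofReal 0)).smul_const Ma
        have hb : HasDerivAt (fun s : ℝ => ((s : ℂ)) • Mu (q x t)) ((1 : ℂ) • Mu (q x t)) 0 :=
          (hasDerivAt_ofReal 0).smul_const (Mu (q x t))
        have := (ha.fun_add hb).add_const (Qm1 (q x t) (pdx q x t))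
        simp only [one_mul, mul_zero, zero_mul, Complex.ofReal_zero, add_zero, zero_smul, zero_add, one_smul] at this
        exact this
      have hprod := (hYreal x t).matmul hcoef
      erw [hprod.deriv]
      norm_num
    erw [e1, e2] at key
    exact key
  -- α and its derivatives
  have hαval : ∀ x t, α x t = deriv (fun l => E x t l) 0 * (E x t 0)ᴴ := by
    intro x t
    rw [hα x t, Matrix.inv_eq_left_inv (hunit x t)]
  have hαx : ∀ x t, HasDerivAt (fun s => α s t) (E x t 0 * Ma * (E x t 0)ᴴ) x := by
    intro x t
    have hfun : (fun s => α s t) = fun s => deriv (fun l => E s t l) 0 * (E s t 0)ᴴ :=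
      funext fun s => hαval s t
    rw [hfun]
    have h := (hYx x t).matmul (conjTranspose_hasDerivAt (hφx x t))
    convert h using 1
    rw [Matrix.conjTranspose_mul, Mu_conjTranspose]
    noncomm_ring
  have hαt : ∀ x t, HasDerivAt (fun s => α x s) (E x t 0 * Mu (q x t) * (E x t 0)ᴴ) t := by
    intro x t
    have hfun : (fun s => α x s) = fun s => deriv (fun l => E x s l) 0 * (E x s 0)ᴴ :=
      funext fun s => hαval x s
    rw [hfun]
    have h := (hYt x t).matmul (conjTranspose_hasDerivAt (hφt x t))
    convert h using 1
    rw [Matrix.conjTranspose_mul, Qm1_conjTranspose]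
    noncomm_ring
  -- identify the derivatives with those of γ
  have hcol0 : ∀ x t (j : Fin 3), toR3 (E x t 0 * Ma * (E x t 0)ᴴ) j = pdx γ x t j := by
    intro x t j
    have h1 : toR3 (E x t 0 * Ma * (E x t 0)ᴴ) j = AdDelta (E x t 0) j 0 := by
      rw [AdDelta_eq _ (hunit x t)]
      simp [delta]
    rw [h1, ← hpart2 x t, he₀ x t j]
  have hcross : ∀ x t, pdt γ x t
      = fun j => (1/2 : ℝ) * (k₁ x t * g x t j 2 - k₂ x t * g x t j 1) := by
    intro x t
    rw [hVFE x t]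
    have hpdxγ : pdx γ x t = fun j => g x t j 0 := funext fun j => (he₀ x t j).symm
    have hpdxx : pdx (pdx γ) x t
        = fun j => (g x t * K3 (k₁ x t) (k₂ x t)) j 0 := by
      have hfn : (fun s => pdx γ s t) = fun s => (fun j => g s t j 0) := by
        funext s
        exact funext fun j => (he₀ s t j).symm
      have hder : HasDerivAt (fun s => (fun j => g s t j 0))
          (fun j => (g x t * K3 (k₁ x t) (k₂ x t)) j 0) x := by
        rw [hasDerivAt_pi]
        intro j
        exact matrix_hasDerivAt_entry (hgx' x t) j 0
      show deriv (fun s => pdx γ s t) x = _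
      rw [hfn]
      exact hder.deriv
    rw [hpdxγ, hpdxx]
    have hexp : (fun j => (g x t * K3 (k₁ x t) (k₂ x t)) j 0)
        = k₁ x t • (fun j => g x t j 1) + k₂ x t • (fun j => g x t j 2) := by
      funext j
      simp [Matrix.mul_apply, Fin.sum_univ_three, K3]
      ring
    rw [hexp, LinearMap.map_add, LinearMap.map_smul, LinearMap.map_smul,
      so3_cross_col01 (hSO3 x t), so3_cross_col02 (hSO3 x t)]
    funext j
    simp
    ring
  have hcolt : ∀ x t (j : Fin 3),
      toR3 (E x t 0 * Mu (q x t) * (E x t 0)ᴴ) j = pdt γ x t j := by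
    intro x t j
    rw [hcross x t]
    rw [hqdef x t, Mu_decomp]
    have hsplit : E x t 0 * ((k₁ x t / 2 : ℝ) • Mb + (k₂ x t / 2 : ℝ) • Mc) * (E x t 0)ᴴ
        = (k₁ x t / 2 : ℝ) • (E x t 0 * Mb * (E x t 0)ᴴ)
          + (k₂ x t / 2 : ℝ) • (E x t 0 * Mc * (E x t 0)ᴴ) := by
      rw [Matrix.mul_add, Matrix.add_mul, Matrix.mul_smul, Matrix.smul_mul,
        Matrix.mul_smul, Matrix.smul_mul]
    rw [hsplit, toR3_apply_add, toR3_apply_smul, toR3_apply_smul]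
    have hb : toR3 (E x t 0 * Mb * (E x t 0)ᴴ) j = g x t j 2 := by
      rw [hpart2 x t, AdDelta_eq _ (hunit x t)]
      simp [delta]
    have hc : toR3 (E x t 0 * Mc * (E x t 0)ᴴ) j = -g x t j 1 := by
      have hneg : E x t 0 * Mc * (E x t 0)ᴴ = -(E x t 0 * (-Mc) * (E x t 0)ᴴ) := by
        noncomm_ring
      rw [hneg, toR3_apply_neg, hpart2 x t, AdDelta_eq _ (hunit x t)]
      simp [delta]
    rw [hb, hc]
    ring
  -- γ - toR3 ∘ α has vanishing partial derivatives
  have hHx : ∀ x t, HasDerivAt (fun s => γ s t - toR3 (α s t)) 0 x := by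
    intro x t
    have h2 : HasDerivAt (fun s => toR3 (α s t)) (pdx γ x t) x := by
      rw [hasDerivAt_pi]
      intro j
      have h := toR3_hasDerivAt (hαx x t) j
      rw [hcol0 x t j] at h
      exact h
    simpa using (hsm.hasDerivAt_x x t).fun_sub h2
  have hHt : ∀ x t, HasDerivAt (fun s => γ x s - toR3 (α x s)) 0 t := by
    intro x t
    have h2 : HasDerivAt (fun s => toR3 (α x s)) (pdt γ x t) t := by
      rw [hasDerivAt_pi]
      intro j
      have h := toR3_hasDerivAt (hαt x t) j
      rw [hcolt x t j] at h
      exact h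
    simpa using (hsm.hasDerivAt_t x t).fun_sub h2
  have hconst : ∀ x t, γ x t - toR3 (α x t) = γ 0 0 - toR3 (α 0 0) := by
    intro x t
    have l1 : γ x t - toR3 (α x t) = γ 0 t - toR3 (α 0 t) :=
      is_const_of_deriv_eq_zero
        (fun y => (hHx y t).differentiableAt)
        (fun y => (hHx y t).deriv) x 0
    have l2 : γ 0 t - toR3 (α 0 t) = γ 0 0 - toR3 (α 0 0) :=
      is_const_of_deriv_eq_zero
        (fun y => (hHt 0 y).differentiableAt)
        (fun y => (hHt 0 y).deriv) t 0
    rw [l1, l2]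
  have hα00 : toR3 (α 0 0) = 0 := by
    have hconstE : (fun l => E 0 0 l) = fun _ : ℂ => φ₀ := funext hE00
    have hY00 : deriv (fun l => E 0 0 l) 0 = 0 := by
      rw [hconstE]
      exact deriv_const 0 φ₀
    rw [hαval 0 0, hY00, Matrix.zero_mul]
    funext j
    exact toR3_zero j
  refine ⟨?_, fun x t => hpart2 x t⟩
  intro x t
  have h := hconst x t
  rw [hα00, sub_zero] at h
  rw [← h]
  abel
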